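/- arXiv:2010.04409 — 2 statements merged into one kernel-verified Lean document; each statement's English description precedes it below -/
import Mathlib

section
/- Let 1 < p < 2 ≤ q, let V ⊆ ℝ^N be open, let a ∈ C¹(V) be bounded and nonnegative, and set A(x, ξ) = p|ξ|^{p−2}ξ + q a(x)|ξ|^{q−2}ξ for x ∈ V and ξ ∈ ℝ^N (with A(x,0) = 0). Let v₁, v₂ ∈ C¹(V) be such that |∇v₁| ≠ 0 on the whole of V or |∇v₂| ≠ 0 on the whole of V. Then for every compact set K ⊆ V there exists a constant c₁ > 0 such that, for all x ∈ K, |A(x, ∇v₂(x)) − A(x, ∇v₁(x))| ≤ c₁ |∇v₂(x) − ∇v₁(x)|. -/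
open MeasureTheory Set

/-- Key estimate: on a bounded region, with one of the two points bounded away from zero,
the map `ξ ↦ ‖ξ‖^r • ξ` is Lipschitz (for `r > -1`). Asymmetric version. -/
lemma rpow_smul_lipschitz_aux {E : Type*} [NormedAddCommGroup E] [NormedSpace ℝ E]
    (r δ M : ℝ) (hr : -1 < r) (hδ : 0 < δ) (hM : δ ≤ M) :
    ∃ C > (0:ℝ), ∀ a b : E, δ ≤ ‖a‖ → ‖a‖ ≤ M → ‖b‖ ≤ M →
      ‖‖b‖ ^ r • b - ‖a‖ ^ r • a‖ ≤ C * ‖b - a‖ := by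
  have hM0 : 0 < M := hδ.trans_le hM
  set L : ℝ := |r| * max ((δ/2) ^ (r-1)) (M ^ (r-1)) with hLdef
  have hL0 : 0 ≤ L := by
    apply mul_nonneg (abs_nonneg r)
    exact le_trans (le_of_lt (Real.rpow_pos_of_pos (by linarith) (r-1))) (le_max_left _ _)
  set C : ℝ := max (4 * (M ^ (r+1) + 1) / δ) (max ((δ/2) ^ r) (M ^ r) + L * M) with hCdef
  have hC0 : 0 < C := lt_of_lt_of_le (by positivity) (le_max_left _ _)
  refine ⟨C, hC0, fun a b ha1 ha2 hb2 => ?_⟩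
  have pow_mul_self : ∀ x : E, ‖x‖ ≤ M → ‖x‖ ^ r * ‖x‖ ≤ M ^ (r+1) := by
    intro x hx
    rcases eq_or_lt_of_le (norm_nonneg x) with h0 | h0
    · rw [← h0, mul_zero]; positivity
    · rw [← Real.rpow_add_one h0.ne' r]
      exact Real.rpow_le_rpow (norm_nonneg x) hx (by linarith)
  have base_le : ∀ e t : ℝ, δ/2 ≤ t → t ≤ M → t ^ e ≤ max ((δ/2) ^ e) (M ^ e) := by
    intro e t ht1 ht2
    rcases le_or_gt 0 e with h | h
    · exact le_max_of_le_right (Real.rpow_le_rpow (by linarith) ht2 h)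
    · exact le_max_of_le_left (Real.rpow_le_rpow_of_nonpos (by linarith) ht1 h.le)
  by_cases hb : ‖b‖ ≤ δ/2
  · have h1 : δ/2 ≤ ‖b - a‖ := by
      have h := norm_sub_norm_le a b
      rw [norm_sub_rev] at h; linarith
    have h2 : ‖‖b‖ ^ r • b - ‖a‖ ^ r • a‖ ≤ 2 * M ^ (r+1) := by
      calc ‖‖b‖ ^ r • b - ‖a‖ ^ r • a‖ ≤ ‖‖b‖ ^ r • b‖ + ‖‖a‖ ^ r • a‖ := norm_sub_le _ _
        _ = ‖b‖ ^ r * ‖b‖ + ‖a‖ ^ r * ‖a‖ := by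
            rw [norm_smul, norm_smul, Real.norm_eq_abs, Real.norm_eq_abs,
              abs_of_nonneg (Real.rpow_nonneg (norm_nonneg b) r),
              abs_of_nonneg (Real.rpow_nonneg (norm_nonneg a) r)]
        _ ≤ M ^ (r+1) + M ^ (r+1) := add_le_add (pow_mul_self b hb2) (pow_mul_self a ha2)
        _ = 2 * M ^ (r+1) := by ring
    calc ‖‖b‖ ^ r • b - ‖a‖ ^ r • a‖ ≤ 2 * M ^ (r+1) := h2
      _ ≤ (4 * (M ^ (r+1) + 1) / δ) * (δ/2) := by
          have heq : (4 * (M ^ (r+1) + 1) / δ) * (δ/2) = 2 * (M ^ (r+1) + 1) := by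
            field_simp; ring
          rw [heq]; linarith
      _ ≤ (4 * (M ^ (r+1) + 1) / δ) * ‖b - a‖ := by
          apply mul_le_mul_of_nonneg_left h1 (by positivity)
      _ ≤ C * ‖b - a‖ := mul_le_mul_of_nonneg_right (le_max_left _ _) (norm_nonneg _)
  · push_neg at hb
    have hdec : ‖b‖ ^ r • b - ‖a‖ ^ r • a
        = ‖b‖ ^ r • (b - a) + (‖b‖ ^ r - ‖a‖ ^ r) • a := by
      rw [smul_sub, sub_smul]; abel
    have hmvt : |‖b‖ ^ r - ‖a‖ ^ r| ≤ L * |‖b‖ - ‖a‖| := by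
      have key := Convex.norm_image_sub_le_of_norm_hasDerivWithin_le
        (f := fun t : ℝ => t ^ r) (f' := fun t : ℝ => r * t ^ (r-1)) (s := Set.Icc (δ/2) M)
        (C := L)
        (fun t ht => (Real.hasDerivAt_rpow_const
          (Or.inl (by linarith [ht.1] : (0:ℝ) < t).ne')).hasDerivWithinAt)
        (fun t ht => by
          rw [Real.norm_eq_abs, abs_mul,
            abs_of_nonneg (Real.rpow_nonneg (by linarith [ht.1] : (0:ℝ) ≤ t) (r-1))]
          exact mul_le_mul_of_nonneg_left (base_le (r-1) t ht.1 ht.2) (abs_nonneg r))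
        (convex_Icc _ _)
        (x := ‖a‖) (y := ‖b‖) ⟨by linarith, ha2⟩ ⟨hb.le, hb2⟩
      simpa [Real.norm_eq_abs] using key
    calc ‖‖b‖ ^ r • b - ‖a‖ ^ r • a‖
        = ‖‖b‖ ^ r • (b - a) + (‖b‖ ^ r - ‖a‖ ^ r) • a‖ := by rw [hdec]
      _ ≤ ‖‖b‖ ^ r • (b - a)‖ + ‖(‖b‖ ^ r - ‖a‖ ^ r) • a‖ := norm_add_le _ _
      _ = ‖b‖ ^ r * ‖b - a‖ + |‖b‖ ^ r - ‖a‖ ^ r| * ‖a‖ := by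
          rw [norm_smul, norm_smul, Real.norm_eq_abs, Real.norm_eq_abs,
            abs_of_nonneg (Real.rpow_nonneg (norm_nonneg b) r)]
      _ ≤ max ((δ/2) ^ r) (M ^ r) * ‖b - a‖ + (L * ‖b - a‖) * M := by
          apply add_le_add
          · exact mul_le_mul_of_nonneg_right (base_le r ‖b‖ hb.le hb2) (norm_nonneg _)
          · calc |‖b‖ ^ r - ‖a‖ ^ r| * ‖a‖ ≤ (L * |‖b‖ - ‖a‖|) * ‖a‖ :=
                mul_le_mul_of_nonneg_right hmvt (norm_nonneg a)
              _ ≤ (L * ‖b - a‖) * M := by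
                  apply mul_le_mul _ ha2 (norm_nonneg a) (by positivity)
                  exact mul_le_mul_of_nonneg_left (abs_norm_sub_norm_le b a) hL0
      _ = (max ((δ/2) ^ r) (M ^ r) + L * M) * ‖b - a‖ := by ring
      _ ≤ C * ‖b - a‖ := mul_le_mul_of_nonneg_right (le_max_right _ _) (norm_nonneg _)

/-- Symmetric version: it is enough that one of the two points is bounded away from zero. -/
lemma rpow_smul_lipschitz {E : Type*} [NormedAddCommGroup E] [NormedSpace ℝ E]
    (r δ M : ℝ) (hr : -1 < r) (hδ : 0 < δ) (hM : δ ≤ M) :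
    ∃ C > (0:ℝ), ∀ a b : E, (δ ≤ ‖a‖ ∨ δ ≤ ‖b‖) → ‖a‖ ≤ M → ‖b‖ ≤ M →
      ‖‖b‖ ^ r • b - ‖a‖ ^ r • a‖ ≤ C * ‖b - a‖ := by
  obtain ⟨C, hC0, hC⟩ := rpow_smul_lipschitz_aux (E := E) r δ M hr hδ hM
  refine ⟨C, hC0, fun a b hor ha2 hb2 => ?_⟩
  rcases hor with h | h
  · exact hC a b h ha2 hb2
  · rw [norm_sub_rev, norm_sub_rev b a]
    exact hC b a h hb2 ha2

/-- The double-phase vector field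
`A(x, ξ) = p|ξ|^{p-2}ξ + q a(x)|ξ|^{q-2}ξ` (with `A(x,0) = 0`). -/
noncomputable def doublePhaseField (N : ℕ) (p q : ℝ)
    (a : EuclideanSpace ℝ (Fin N) → ℝ) (x ξ : EuclideanSpace ℝ (Fin N)) :
    EuclideanSpace ℝ (Fin N) :=
  (p * ‖ξ‖ ^ (p - 2) + q * a x * ‖ξ‖ ^ (q - 2)) • ξ

/-- Let `1 < p < 2 ≤ q`, let `V ⊆ ℝ^N` be open, let `a ∈ C¹(V)` be bounded and nonnegative,
and let `A(x, ξ) = p|ξ|^{p-2}ξ + q a(x)|ξ|^{q-2}ξ`. Let `v₁, v₂ ∈ C¹(V)` be such that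
`|∇v₁| ≠ 0` on the whole of `V` or `|∇v₂| ≠ 0` on the whole of `V`. Then for every compact
`K ⊆ V` there is `c₁ > 0` such that, for all `x ∈ K`,
`|A(x, ∇v₂(x)) − A(x, ∇v₁(x))| ≤ c₁ |∇v₂(x) − ∇v₁(x)|`. -/
theorem doublePhaseField_lipschitz_estimate (N : ℕ) (p q : ℝ)
    (hp : 1 < p) (hp2 : p < 2) (hq : 2 ≤ q)
    (V : Set (EuclideanSpace ℝ (Fin N))) (hVopen : IsOpen V)
    (a : EuclideanSpace ℝ (Fin N) → ℝ)
    (ha : ContDiffOn ℝ 1 a V)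
    (habd : ∃ M : ℝ, ∀ x ∈ V, |a x| ≤ M)
    (hann : ∀ x ∈ V, 0 ≤ a x)
    (v₁ v₂ : EuclideanSpace ℝ (Fin N) → ℝ)
    (hv₁ : ContDiffOn ℝ 1 v₁ V) (hv₂ : ContDiffOn ℝ 1 v₂ V)
    (hgrad : (∀ x ∈ V, gradient v₁ x ≠ 0) ∨ (∀ x ∈ V, gradient v₂ x ≠ 0))
    (K : Set (EuclideanSpace ℝ (Fin N))) (hK : IsCompact K) (hKV : K ⊆ V) :
    ∃ c₁ > (0 : ℝ), ∀ x ∈ K,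
      ‖doublePhaseField N p q a x (gradient v₂ x) - doublePhaseField N p q a x (gradient v₁ x)‖
        ≤ c₁ * ‖gradient v₂ x - gradient v₁ x‖ := by
  rcases K.eq_empty_or_nonempty with hKe | hKne
  · exact ⟨1, one_pos, by simp [hKe]⟩
  obtain ⟨Ma, hMa⟩ := habd
  -- continuity of gradients
  have hgc : ∀ (v : EuclideanSpace ℝ (Fin N) → ℝ), ContDiffOn ℝ 1 v V →
      ContinuousOn (fun x => gradient v x) V := by
    intro v hv
    have h1 : ContinuousOn (fderiv ℝ v) V :=
      hv.continuousOn_fderiv_of_isOpen hVopen le_rfl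
    have h2 : (fun x => gradient v x)
        = fun x => (InnerProductSpace.toDual ℝ (EuclideanSpace ℝ (Fin N))).symm
            (fderiv ℝ v x) := rfl
    rw [h2]
    exact (InnerProductSpace.toDual ℝ (EuclideanSpace ℝ (Fin N))).symm.continuous.comp_continuousOn h1
  -- uniform lower bound on one of the gradients
  have hδex : ∃ δ > (0:ℝ), ∀ x ∈ K,
      δ ≤ ‖gradient v₁ x‖ ∨ δ ≤ ‖gradient v₂ x‖ := by
    rcases hgrad with h | h
    · obtain ⟨x₀, hx₀K, hmin⟩ := hK.exists_isMinOn hKne ((hgc v₁ hv₁).mono hKV).norm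
      exact ⟨‖gradient v₁ x₀‖, norm_pos_iff.mpr (h x₀ (hKV hx₀K)),
        fun x hx => Or.inl (isMinOn_iff.mp hmin x hx)⟩
    · obtain ⟨x₀, hx₀K, hmin⟩ := hK.exists_isMinOn hKne ((hgc v₂ hv₂).mono hKV).norm
      exact ⟨‖gradient v₂ x₀‖, norm_pos_iff.mpr (h x₀ (hKV hx₀K)),
        fun x hx => Or.inr (isMinOn_iff.mp hmin x hx)⟩
  obtain ⟨δ, hδ0, hδK⟩ := hδex
  -- uniform upper bound on both gradients
  obtain ⟨M₁, hM₁⟩ := hK.exists_bound_of_continuousOn ((hgc v₁ hv₁).mono hKV)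
  obtain ⟨M₂, hM₂⟩ := hK.exists_bound_of_continuousOn ((hgc v₂ hv₂).mono hKV)
  set M : ℝ := max (max M₁ M₂) δ with hMdef
  have hδM : δ ≤ M := le_max_right _ _
  have hM₁' : ∀ x ∈ K, ‖gradient v₁ x‖ ≤ M :=
    fun x hx => le_trans (hM₁ x hx) (le_trans (le_max_left _ _) (le_max_left _ _))
  have hM₂' : ∀ x ∈ K, ‖gradient v₂ x‖ ≤ M :=
    fun x hx => le_trans (hM₂ x hx) (le_trans (le_max_right _ _) (le_max_left _ _))
  obtain ⟨Cp, hCp0, hCp⟩ :=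
    rpow_smul_lipschitz (E := EuclideanSpace ℝ (Fin N)) (p - 2) δ M (by linarith) hδ0 hδM
  obtain ⟨Cq, hCq0, hCq⟩ :=
    rpow_smul_lipschitz (E := EuclideanSpace ℝ (Fin N)) (q - 2) δ M (by linarith) hδ0 hδM
  refine ⟨p * Cp + q * max Ma 0 * Cq, by positivity, fun x hx => ?_⟩
  set ξ₁ := gradient v₁ x
  set ξ₂ := gradient v₂ x
  have hax : 0 ≤ a x := hann x (hKV hx)
  have haxM : a x ≤ max Ma 0 := le_trans (le_abs_self _)
    (le_trans (hMa x (hKV hx)) (le_max_left _ _))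
  have hsplit : doublePhaseField N p q a x ξ₂ - doublePhaseField N p q a x ξ₁
      = p • (‖ξ₂‖ ^ (p-2) • ξ₂ - ‖ξ₁‖ ^ (p-2) • ξ₁)
        + (q * a x) • (‖ξ₂‖ ^ (q-2) • ξ₂ - ‖ξ₁‖ ^ (q-2) • ξ₁) := by
    simp only [doublePhaseField]
    module
  have hΔp : ‖‖ξ₂‖ ^ (p-2) • ξ₂ - ‖ξ₁‖ ^ (p-2) • ξ₁‖ ≤ Cp * ‖ξ₂ - ξ₁‖ :=
    hCp ξ₁ ξ₂ (hδK x hx) (hM₁' x hx) (hM₂' x hx)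
  have hΔq : ‖‖ξ₂‖ ^ (q-2) • ξ₂ - ‖ξ₁‖ ^ (q-2) • ξ₁‖ ≤ Cq * ‖ξ₂ - ξ₁‖ :=
    hCq ξ₁ ξ₂ (hδK x hx) (hM₁' x hx) (hM₂' x hx)
  calc ‖doublePhaseField N p q a x ξ₂ - doublePhaseField N p q a x ξ₁‖
      ≤ ‖p • (‖ξ₂‖ ^ (p-2) • ξ₂ - ‖ξ₁‖ ^ (p-2) • ξ₁)‖
        + ‖(q * a x) • (‖ξ₂‖ ^ (q-2) • ξ₂ - ‖ξ₁‖ ^ (q-2) • ξ₁)‖ := by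
        rw [hsplit]; exact norm_add_le _ _
    _ = p * ‖‖ξ₂‖ ^ (p-2) • ξ₂ - ‖ξ₁‖ ^ (p-2) • ξ₁‖
        + (q * a x) * ‖‖ξ₂‖ ^ (q-2) • ξ₂ - ‖ξ₁‖ ^ (q-2) • ξ₁‖ := by
        rw [norm_smul, norm_smul, Real.norm_eq_abs, Real.norm_eq_abs,
          abs_of_pos (by linarith : (0:ℝ) < p),
          abs_of_nonneg (by positivity : (0:ℝ) ≤ q * a x)]
    _ ≤ p * (Cp * ‖ξ₂ - ξ₁‖) + (q * max Ma 0) * (Cq * ‖ξ₂ - ξ₁‖) := by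
        apply add_le_add
        · exact mul_le_mul_of_nonneg_left hΔp (by linarith)
        · apply mul_le_mul
          · exact mul_le_mul_of_nonneg_left haxM (by linarith)
          · exact hΔq
          · exact norm_nonneg _
          · positivity
    _ = (p * Cp + q * max Ma 0 * Cq) * ‖ξ₂ - ξ₁‖ := by ring
end

section
/- Let 1 < p < 2 ≤ q, let V ⊆ ℝ^N be open, let a ∈ C¹(V) be bounded and nonnegative, and set A(x, ξ) = p|ξ|^{p−2}ξ + q a(x)|ξ|^{q−2}ξ for x ∈ V and ξ ∈ ℝ^N (with A(x,0) = 0). Let v₁, v₂ ∈ C¹(V) be such that |∇v₁| ≠ 0 on the whole of V or |∇v₂| ≠ 0 on the whole of V. Then for every compact set K ⊆ V there exists a constant c₂ > 0 such that, for all x ∈ K, ⟨A(x, ∇v₂(x)) − A(x, ∇v₁(x)), ∇v₂(x) − ∇v₁(x)⟩ ≥ c₂ |∇v₂(x) − ∇v₁(x)|². -/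
open MeasureTheory Set

/-!
Write `s = ‖ξ‖`, `t = ‖η‖`. For scalars `α, β` the pairing `⟪α ξ - β η, ξ - η⟫` is the sum of
a radial part `(α s - β t)(s - t)` and an angular part `(α + β)(s t - ⟪ξ, η⟫)`, while
`‖ξ - η‖² = (s - t)² + 2 (s t - ⟪ξ, η⟫)`. For the `q`-phase, `α = s^{q-2}`, both parts are
nonnegative. For the `p`-phase, `α = s^{p-2}`, the tangent-line inequality for the concave map
`s ↦ s^{p-1}` bounds the radial part below by `(p-1) M^{p-2} (s - t)²` as long as `s, t ≤ M`,
and `s^{p-2} ≥ M^{p-2}` bounds the angular part. On a compact set the gradients of `C¹`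
functions are bounded, which provides `M`.
-/

open scoped RealInnerProductSpace

namespace Real

theorem rpow_le_rpow_add_mul_sub {r s t : ℝ} (hr0 : 0 ≤ r) (hr1 : r ≤ 1) (hs : 0 < s)
    (ht : 0 ≤ t) : t ^ r ≤ s ^ r + r * s ^ (r - 1) * (t - s) := by
  have hbern := rpow_one_add_le_one_add_mul_self
    (by linarith [div_nonneg ht hs.le] : -1 ≤ t / s - 1) hr0 hr1
  rw [add_sub_cancel, div_rpow ht hs.le, div_le_iff₀ (rpow_pos_of_pos hs r)] at hbern
  rw [rpow_sub_one hs.ne']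
  calc t ^ r ≤ (1 + r * (t / s - 1)) * s ^ r := hbern
    _ = s ^ r + r * (s ^ r / s) * (t - s) := by field_simp

theorem mul_rpow_mul_sq_le_sub_mul_rpow_sub_rpow {r M s t : ℝ} (hr0 : 0 ≤ r) (hr1 : r ≤ 1)
    (hs : 0 ≤ s) (ht : 0 ≤ t) (hsM : s ≤ M) (htM : t ≤ M) :
    r * M ^ (r - 1) * (s - t) ^ 2 ≤ (s - t) * (s ^ r - t ^ r) := by
  wlog hts : t ≤ s generalizing s t
  · convert this ht hs htM hsM (le_of_not_ge hts) using 1 <;> ring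
  rcases hs.eq_or_lt with rfl | hs
  · simp [le_antisymm hts ht]
  have hM : M ^ (r - 1) ≤ s ^ (r - 1) := rpow_le_rpow_of_nonpos hs hsM (by linarith)
  have htangent := rpow_le_rpow_add_mul_sub hr0 hr1 hs ht
  calc r * M ^ (r - 1) * (s - t) ^ 2 ≤ r * s ^ (r - 1) * (s - t) * (s - t) := by
        rw [sq, ← mul_assoc]; gcongr
    _ ≤ (s - t) * (s ^ r - t ^ r) := by nlinarith

theorem rpow_sub_two_mul_self {r s : ℝ} (hr : r ≠ 1) (hs : 0 ≤ s) :
    s ^ (r - 2) * s = s ^ (r - 1) := by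
  rw [show r - 1 = r - 2 + 1 by ring, rpow_add_one' hs (by contrapose! hr; linarith)]

end Real

section InnerProductSpace

variable {E : Type*} [NormedAddCommGroup E] [InnerProductSpace ℝ E]

theorem inner_smul_sub_smul_sub_eq (α β : ℝ) (x y : E) :
    ⟪α • x - β • y, x - y⟫ =
      (α * ‖x‖ - β * ‖y‖) * (‖x‖ - ‖y‖) + (α + β) * (‖x‖ * ‖y‖ - ⟪x, y⟫) := by
  simp only [inner_sub_left, inner_sub_right, real_inner_smul_left, real_inner_self_eq_norm_sq,
    real_inner_comm x y]
  ring

theorem inner_rpow_smul_sub_rpow_smul_nonneg {q : ℝ} (hq : 1 < q) (x y : E) :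
    0 ≤ ⟪‖x‖ ^ (q - 2) • x - ‖y‖ ^ (q - 2) • y, x - y⟫ := by
  rw [inner_smul_sub_smul_sub_eq, Real.rpow_sub_two_mul_self hq.ne' (norm_nonneg x),
    Real.rpow_sub_two_mul_self hq.ne' (norm_nonneg y)]
  have hmono : 0 ≤ (‖x‖ ^ (q - 1) - ‖y‖ ^ (q - 1)) * (‖x‖ - ‖y‖) := by
    rcases le_total ‖y‖ ‖x‖ with h | h
    · exact mul_nonneg (sub_nonneg.2 (by gcongr)) (sub_nonneg.2 h)
    · exact mul_nonneg_of_nonpos_of_nonpos (sub_nonpos.2 (by gcongr)) (sub_nonpos.2 h)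
  have hcs : 0 ≤ ‖x‖ * ‖y‖ - ⟪x, y⟫ := sub_nonneg.2 (real_inner_le_norm x y)
  positivity

theorem mul_norm_sub_sq_le_inner_rpow_smul_sub_rpow_smul {p M : ℝ} (hp : 1 < p) (hp2 : p ≤ 2)
    {x y : E} (hx : ‖x‖ ≤ M) (hy : ‖y‖ ≤ M) :
    (p - 1) * M ^ (p - 2) * ‖x - y‖ ^ 2 ≤
      ⟪‖x‖ ^ (p - 2) • x - ‖y‖ ^ (p - 2) • y, x - y⟫ := by
  rw [inner_smul_sub_smul_sub_eq, Real.rpow_sub_two_mul_self hp.ne' (norm_nonneg x),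
    Real.rpow_sub_two_mul_self hp.ne' (norm_nonneg y), norm_sub_sq_real]
  have hradial := Real.mul_rpow_mul_sq_le_sub_mul_rpow_sub_rpow (r := p - 1) (by linarith)
    (by linarith) (norm_nonneg x) (norm_nonneg y) hx hy
  rw [show p - 1 - 1 = p - 2 by ring] at hradial
  have hangular : 2 * ((p - 1) * M ^ (p - 2)) * (‖x‖ * ‖y‖ - ⟪x, y⟫) ≤
      (‖x‖ ^ (p - 2) + ‖y‖ ^ (p - 2)) * (‖x‖ * ‖y‖ - ⟪x, y⟫) := by
    rcases eq_or_ne x 0 with rfl | hx0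
    · simp
    rcases eq_or_ne y 0 with rfl | hy0
    · simp
    have hMx := Real.rpow_le_rpow_of_nonpos (norm_pos_iff.2 hx0) hx (by linarith : p - 2 ≤ 0)
    have hMy := Real.rpow_le_rpow_of_nonpos (norm_pos_iff.2 hy0) hy (by linarith : p - 2 ≤ 0)
    have hM0 : 0 ≤ M ^ (p - 2) := Real.rpow_nonneg ((norm_nonneg x).trans hx) _
    gcongr
    · exact sub_nonneg.2 (real_inner_le_norm x y)
    · nlinarith
  linear_combination hradial + hangular

end InnerProductSpace

theorem ContDiffOn.continuousOn_gradient {E : Type*} [NormedAddCommGroup E]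
    [InnerProductSpace ℝ E] [CompleteSpace E] {f : E → ℝ} {V : Set E}
    (hf : ContDiffOn ℝ 1 f V) (hV : IsOpen V) : ContinuousOn (gradient f) V :=
  (InnerProductSpace.toDual ℝ E).symm.continuous.comp_continuousOn
    (hf.continuousOn_fderiv_of_isOpen hV le_rfl)

theorem doublePhaseField_eq (N : ℕ) (p q : ℝ) (a : EuclideanSpace ℝ (Fin N) → ℝ)
    (x ξ : EuclideanSpace ℝ (Fin N)) :
    doublePhaseField N p q a x ξ =
      p • (‖ξ‖ ^ (p - 2) • ξ) + (q * a x) • (‖ξ‖ ^ (q - 2) • ξ) := by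
  rw [doublePhaseField, add_smul, smul_smul, smul_smul, mul_assoc]

theorem mul_norm_sub_sq_le_inner_doublePhaseField_sub {N : ℕ} {p q M : ℝ} (hp : 1 < p)
    (hp2 : p ≤ 2) (hq : 1 < q) {a : EuclideanSpace ℝ (Fin N) → ℝ}
    {x : EuclideanSpace ℝ (Fin N)} (ha : 0 ≤ a x) {ξ η : EuclideanSpace ℝ (Fin N)}
    (hξ : ‖ξ‖ ≤ M) (hη : ‖η‖ ≤ M) :
    p * ((p - 1) * M ^ (p - 2)) * ‖ξ - η‖ ^ 2 ≤
      ⟪doublePhaseField N p q a x ξ - doublePhaseField N p q a x η, ξ - η⟫ := by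
  have hsplit : doublePhaseField N p q a x ξ - doublePhaseField N p q a x η =
      p • (‖ξ‖ ^ (p - 2) • ξ - ‖η‖ ^ (p - 2) • η) +
        (q * a x) • (‖ξ‖ ^ (q - 2) • ξ - ‖η‖ ^ (q - 2) • η) := by
    simp only [doublePhaseField_eq, smul_sub]; abel
  rw [hsplit, inner_add_left, real_inner_smul_left, real_inner_smul_left, mul_assoc]
  have hpPart := mul_norm_sub_sq_le_inner_rpow_smul_sub_rpow_smul hp hp2 hξ hη
  have hqPart := inner_rpow_smul_sub_rpow_smul_nonneg hq ξ η
  have hqa : 0 ≤ q * a x := by positivity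
  linear_combination (mul_le_mul_of_nonneg_left hpPart (by linarith : (0 : ℝ) ≤ p)) +
    mul_nonneg hqa hqPart

theorem doublePhaseField_monotonicity_estimate_general (N : ℕ) (p q : ℝ)
    (hp : 1 < p) (hp2 : p < 2) (hq : 2 ≤ q)
    (V : Set (EuclideanSpace ℝ (Fin N))) (hVopen : IsOpen V)
    (a : EuclideanSpace ℝ (Fin N) → ℝ)
    (hann : ∀ x ∈ V, 0 ≤ a x)
    (v₁ v₂ : EuclideanSpace ℝ (Fin N) → ℝ)
    (hv₁ : ContDiffOn ℝ 1 v₁ V) (hv₂ : ContDiffOn ℝ 1 v₂ V)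
    (K : Set (EuclideanSpace ℝ (Fin N))) (hK : IsCompact K) (hKV : K ⊆ V) :
    ∃ c₂ > (0 : ℝ), ∀ x ∈ K,
      c₂ * ‖gradient v₂ x - gradient v₁ x‖ ^ (2 : ℕ) ≤
        (inner ℝ (doublePhaseField N p q a x (gradient v₂ x)
            - doublePhaseField N p q a x (gradient v₁ x))
          (gradient v₂ x - gradient v₁ x) : ℝ) := by
  obtain ⟨C₁, hC₁⟩ :=
    hK.exists_bound_of_continuousOn ((hv₁.continuousOn_gradient hVopen).mono hKV)
  obtain ⟨C₂, hC₂⟩ :=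
    hK.exists_bound_of_continuousOn ((hv₂.continuousOn_gradient hVopen).mono hKV)
  set M := max 1 (max C₁ C₂)
  have hMp : 0 < M ^ (p - 2) := Real.rpow_pos_of_pos (lt_max_of_lt_left one_pos) _
  refine ⟨p * ((p - 1) * M ^ (p - 2)), mul_pos (by linarith) (mul_pos (by linarith) hMp),
    fun x hx => ?_⟩
  exact mul_norm_sub_sq_le_inner_doublePhaseField_sub hp hp2.le (by linarith) (hann x (hKV hx))
    ((hC₂ x hx).trans (by simp [M])) ((hC₁ x hx).trans (by simp [M]))

/-- Let `1 < p < 2 ≤ q`, let `V ⊆ ℝ^N` be open, let `a ∈ C¹(V)` be bounded and nonnegative,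
and let `A(x, ξ) = p|ξ|^{p-2}ξ + q a(x)|ξ|^{q-2}ξ`. Let `v₁, v₂ ∈ C¹(V)` be such that
`|∇v₁| ≠ 0` on the whole of `V` or `|∇v₂| ≠ 0` on the whole of `V`. Then for every compact
`K ⊆ V` there is `c₂ > 0` such that, for all `x ∈ K`,
`⟨A(x, ∇v₂(x)) − A(x, ∇v₁(x)), ∇v₂(x) − ∇v₁(x)⟩ ≥ c₂ |∇v₂(x) − ∇v₁(x)|²`. -/
theorem doublePhaseField_monotonicity_estimate (N : ℕ) (p q : ℝ)
    (hp : 1 < p) (hp2 : p < 2) (hq : 2 ≤ q)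
    (V : Set (EuclideanSpace ℝ (Fin N))) (hVopen : IsOpen V)
    (a : EuclideanSpace ℝ (Fin N) → ℝ)
    (ha : ContDiffOn ℝ 1 a V)
    (habd : ∃ M : ℝ, ∀ x ∈ V, |a x| ≤ M)
    (hann : ∀ x ∈ V, 0 ≤ a x)
    (v₁ v₂ : EuclideanSpace ℝ (Fin N) → ℝ)
    (hv₁ : ContDiffOn ℝ 1 v₁ V) (hv₂ : ContDiffOn ℝ 1 v₂ V)
    (hgrad : (∀ x ∈ V, gradient v₁ x ≠ 0) ∨ (∀ x ∈ V, gradient v₂ x ≠ 0))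
    (K : Set (EuclideanSpace ℝ (Fin N))) (hK : IsCompact K) (hKV : K ⊆ V) :
    ∃ c₂ > (0 : ℝ), ∀ x ∈ K,
      c₂ * ‖gradient v₂ x - gradient v₁ x‖ ^ (2 : ℕ) ≤
        (inner ℝ (doublePhaseField N p q a x (gradient v₂ x)
            - doublePhaseField N p q a x (gradient v₁ x))
          (gradient v₂ x - gradient v₁ x) : ℝ) :=
  doublePhaseField_monotonicity_estimate_general N p q hp hp2 hq V hVopen a hann v₁ v₂ hv₁ hv₂ K hK
    hKV
end
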